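/- Every neutral mechanism satisfying elementary monotonicity is ordinally Bayesian incentive compatible with respect to the uniform prior: for every agent i and all preferences P_i, P'_i, the interim share vector from truthfully reporting P_i first-order stochastically dominates, with respect to P_i, the interim share vector from reporting P'_i. -/

import Mathlib

open Finset

/-!
Under a prior that is invariant under relabelling objects, neutrality makes agent `i`'s interim
share of an object depend only on the rank the report gives it: `interim P a = f (P⁻¹ a)` for one
rank function `f`. Elementary monotonicity, averaged over the other agents, makes `f` antitone.
Any report `P'` then gives the top `ℓ + 1` objects of `P` the values of `f` on some `ℓ + 1` ranks,
whose sum is at most the sum of `f` over the top `ℓ + 1` ranks, which truthful reporting obtains.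
-/

/-- A preference is a ranking: position `k` maps to the `k`-th ranked object.
Objects are identified with `Fin n`. -/
abbrev Pref (n : ℕ) := Fin n ≃ Fin n

/-- `π` first-order stochastically dominates `π'` with respect to `P`. -/
def FOSD {n : ℕ} (P : Pref n) (π π' : Fin n → ℝ) : Prop :=
  ∀ ℓ : Fin n, ∑ k ∈ Finset.Iic ℓ, π' (P k) ≤ ∑ k ∈ Finset.Iic ℓ, π (P k)

/-- A share vector: a probability distribution over objects. -/
def IsShare {n : ℕ} (π : Fin n → ℝ) : Prop :=
  (∀ a, 0 ≤ π a) ∧ ∑ a, π a = 1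

/-- `P'` is an `(a,b)`-swap of `P`: `a` is ranked immediately above `b` in `P`,
they are transposed in `P'`, and all other ranks coincide. -/
def IsSwap {n : ℕ} (P P' : Pref n) (a b : Fin n) : Prop :=
  ∃ (k : Fin n) (hk : k.val + 1 < n),
    P k = a ∧ P ⟨k.val + 1, hk⟩ = b ∧ P' k = b ∧ P' ⟨k.val + 1, hk⟩ = a ∧
    ∀ j : Fin n, j ≠ k → j ≠ ⟨k.val + 1, hk⟩ → P' j = P j

/-- A mechanism: maps a preference profile to shares `Q prof i a`. -/
abbrev Mech (n : ℕ) := (Fin n → Pref n) → Fin n → Fin n → ℝ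

/-- The output of the mechanism is always a bistochastic matrix. -/
def Bistochastic {n : ℕ} (Q : Mech n) : Prop :=
  ∀ prof : Fin n → Pref n,
    (∀ i a, 0 ≤ Q prof i a) ∧ (∀ i, ∑ a, Q prof i a = 1) ∧ (∀ a, ∑ i, Q prof i a = 1)

def StrategyProof {n : ℕ} (Q : Mech n) : Prop :=
  ∀ (prof : Fin n → Pref n) (i : Fin n) (P' : Pref n),
    FOSD (prof i) (Q prof i) (Q (Function.update prof i P') i)

/-- Elementary monotonicity. -/
def ElemMono {n : ℕ} (Q : Mech n) : Prop :=
  ∀ (prof : Fin n → Pref n) (i : Fin n) (P' : Pref n) (a b : Fin n),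
    IsSwap (prof i) P' a b →
      Q prof i b ≤ Q (Function.update prof i P') i b ∧
      Q (Function.update prof i P') i a ≤ Q prof i a

/-- A probability distribution on a finite type. -/
def IsDist {α : Type*} [Fintype α] (ν : α → ℝ) : Prop :=
  (∀ x, 0 ≤ ν x) ∧ ∑ x, ν x = 1

/-- Build a full profile from agent `i`'s report and the others' profile. -/
def extendProf {n : ℕ} (i : Fin n) (Pi : Pref n)
    (pm : {j : Fin n // j ≠ i} → Pref n) : Fin n → Pref n :=
  fun j => if h : j = i then Pi else pm ⟨j, h⟩

/-- Interim share of object `a` for agent `i` reporting `Pi`, under i.i.d. prior `μ`. -/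
noncomputable def interim {n : ℕ} (Q : Mech n) (μ : Pref n → ℝ) (i : Fin n)
    (Pi : Pref n) (a : Fin n) : ℝ :=
  ∑ pm : ({j : Fin n // j ≠ i} → Pref n), (∏ j, μ (pm j)) * Q (extendProf i Pi pm) i a

/-- Ordinal Bayesian incentive compatibility with respect to prior `μ`. -/
def OBIC {n : ℕ} (Q : Mech n) (μ : Pref n → ℝ) : Prop :=
  ∀ (i : Fin n) (Pi P' : Pref n), FOSD Pi (interim Q μ i Pi) (interim Q μ i P')

/-- The uniform prior over the `n!` preferences. -/
noncomputable def unif (n : ℕ) : Pref n → ℝ := fun _ => (n.factorial : ℝ)⁻¹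

/-- Neutrality: relabeling objects by `σ` (so that rank `k` of `P.trans σ` is `σ (P k)`)
permutes the shares accordingly. -/
def Neutral {n : ℕ} (Q : Mech n) : Prop :=
  ∀ (σ : Equiv.Perm (Fin n)) (prof : Fin n → Pref n) (i a : Fin n),
    Q prof i a = Q (fun j => (prof j).trans σ) i (σ a)

theorem Finset.sum_le_sum_Iic_of_antitone {α M : Type*} [LinearOrder α] [LocallyFiniteOrderBot α]
    [AddCommMonoid M] [PartialOrder M] [IsOrderedAddMonoid M] {f : α → M} (hf : Antitone f)
    {S : Finset α} {ℓ : α} (hS : #S = #(Iic ℓ)) :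
    ∑ x ∈ S, f x ≤ ∑ x ∈ Iic ℓ, f x := by
  have hcard : #(S \ Iic ℓ) = #(Iic ℓ \ S) := by
    have h₁ := card_sdiff_add_card_inter S (Iic ℓ)
    have h₂ := card_sdiff_add_card_inter (Iic ℓ) S
    rw [inter_comm] at h₂
    omega
  have hout : ∑ x ∈ S \ Iic ℓ, f x ≤ #(S \ Iic ℓ) • f ℓ :=
    sum_le_card_nsmul _ _ _ fun x hx =>
      hf (not_le.1 fun h => (mem_sdiff.1 hx).2 (mem_Iic.2 h)).le
  have hin : #(Iic ℓ \ S) • f ℓ ≤ ∑ x ∈ Iic ℓ \ S, f x :=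
    card_nsmul_le_sum _ _ _ fun x hx => hf (mem_Iic.1 (mem_sdiff.1 hx).1)
  calc ∑ x ∈ S, f x = ∑ x ∈ S ∩ Iic ℓ, f x + ∑ x ∈ S \ Iic ℓ, f x :=
        (sum_inter_add_sum_sdiff _ _ _).symm
    _ ≤ ∑ x ∈ S ∩ Iic ℓ, f x + ∑ x ∈ Iic ℓ \ S, f x :=
        add_le_add le_rfl (hout.trans (hcard ▸ hin))
    _ = ∑ x ∈ Iic ℓ, f x := by rw [inter_comm, sum_inter_add_sum_sdiff]

theorem fosd_comp_symm_of_antitone {n : ℕ} {f : Fin n → ℝ} (hf : Antitone f) (P P' : Pref n) :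
    FOSD P (fun a => f (P.symm a)) (fun a => f (P'.symm a)) := by
  intro ℓ
  have hinj : Function.Injective fun k => P'.symm (P k) := P'.symm.injective.comp P.injective
  simp only [Equiv.symm_apply_apply]
  rw [← sum_image fun x _ y _ h => hinj h]
  exact sum_le_sum_Iic_of_antitone hf (card_image_of_injective _ hinj)

theorem isSwap_refl_swap {n : ℕ} (k : Fin n) :
    IsSwap (Equiv.refl (Fin (n + 1))) (Equiv.swap k.castSucc k.succ) k.castSucc k.succ := by
  have hsucc : (⟨k.castSucc.val + 1, by simp⟩ : Fin (n + 1)) = k.succ := Fin.ext rfl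
  refine ⟨k.castSucc, by simp, rfl, by rw [hsucc]; rfl, Equiv.swap_apply_left _ _,
    by rw [hsucc]; exact Equiv.swap_apply_right _ _, fun j hj₁ hj₂ => ?_⟩
  rw [hsucc] at hj₂
  exact Equiv.swap_apply_of_ne_of_ne hj₁ hj₂

theorem update_extendProf {n : ℕ} (i : Fin n) (P P' : Pref n)
    (pm : {j : Fin n // j ≠ i} → Pref n) :
    Function.update (extendProf i P pm) i P' = extendProf i P' pm := by
  funext j
  by_cases h : j = i <;> simp [Function.update, extendProf, h]

theorem extendProf_trans {n : ℕ} (i : Fin n) (P : Pref n) (σ : Equiv.Perm (Fin n))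
    (pm : {j : Fin n // j ≠ i} → Pref n) :
    (fun j => (extendProf i P pm j).trans σ) =
      extendProf i (P.trans σ) fun j => (pm j).trans σ := by
  funext j
  by_cases h : j = i <;> simp [extendProf, h]

section Interim

variable {n : ℕ} {Q : Mech n} {μ : Pref n → ℝ} (i : Fin n)

theorem interim_trans (hN : Neutral Q) (hμ : ∀ (σ : Equiv.Perm (Fin n)) P, μ (P.trans σ) = μ P)
    (σ : Equiv.Perm (Fin n)) (P : Pref n) (a : Fin n) :
    interim Q μ i (P.trans σ) (σ a) = interim Q μ i P a := by
  refine (Fintype.sum_equiv (Equiv.piCongrRight fun _ => Equiv.mulLeft σ) _ _ fun pm => ?_).symm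
  change _ = (∏ j, μ ((pm j).trans σ)) *
    Q (extendProf i (P.trans σ) fun j => (pm j).trans σ) i (σ a)
  rw [hN σ, extendProf_trans]
  simp only [hμ]

theorem interim_eq_interim_refl (hN : Neutral Q)
    (hμ : ∀ (σ : Equiv.Perm (Fin n)) P, μ (P.trans σ) = μ P) (P : Pref n) :
    interim Q μ i P = fun a => interim Q μ i (Equiv.refl _) (P.symm a) := by
  funext a
  simpa using interim_trans i hN hμ P (Equiv.refl _) (P.symm a)

theorem interim_le_interim_of_isSwap (hM : ElemMono Q) (hμ : ∀ P, 0 ≤ μ P) {P P' : Pref n}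
    {a b : Fin n} (h : IsSwap P P' a b) : interim Q μ i P b ≤ interim Q μ i P' b := by
  refine sum_le_sum fun pm _ => mul_le_mul_of_nonneg_left ?_ (prod_nonneg fun j _ => hμ _)
  have := (hM (extendProf i P pm) i P' a b (by simpa [extendProf] using h)).1
  rwa [update_extendProf] at this

theorem antitone_interim_refl (hN : Neutral Q) (hM : ElemMono Q)
    (hμ : ∀ (σ : Equiv.Perm (Fin n)) P, μ (P.trans σ) = μ P) (hμ₀ : ∀ P, 0 ≤ μ P) :
    Antitone (interim Q μ i (Equiv.refl _)) := by
  cases n with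
  | zero => exact fun a => a.elim0
  | succ m =>
    refine Fin.antitone_iff_succ_le.2 fun k => ?_
    have h := interim_le_interim_of_isSwap i hM hμ₀ (isSwap_refl_swap k)
    rw [interim_eq_interim_refl i hN hμ (Equiv.swap _ _)] at h
    simpa using h

end Interim

theorem stmt9_general {n : ℕ} (Q : Mech n) (hN : Neutral Q)
    (hM : ElemMono Q) : OBIC Q (unif n) := by
  have hμ : ∀ (σ : Equiv.Perm (Fin n)) P, unif n (P.trans σ) = unif n P := fun _ _ => rfl
  have hμ₀ : ∀ P, 0 ≤ unif n P := fun _ => by unfold unif; positivity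
  intro i P P'
  rw [interim_eq_interim_refl i hN hμ P, interim_eq_interim_refl i hN hμ P']
  exact fosd_comp_symm_of_antitone (antitone_interim_refl i hN hM hμ hμ₀) P P'

theorem stmt9 {n : ℕ} (Q : Mech n) (hQ : Bistochastic Q) (hN : Neutral Q)
    (hM : ElemMono Q) : OBIC Q (unif n) :=
  stmt9_general Q hN hM
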